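/- arXiv:1904.03305 — 3 statements merged into one kernel-verified Lean document; each statement's English description precedes it below -/
import Mathlib

section
/- If the forgetting factor α satisfies 0 < α ≤ 0.5, then the FOFE encoding is injective: for any two finite sequences of words (of possibly different lengths) over a countable vocabulary V, if their FOFE codes are equal, the sequences are equal. -/
/-!
For `0 ≤ α ≤ 1/2` every coordinate of a FOFE code lies in `[0, 2)`, since `α z + 1 < 2` whenever
`z < 2`. Appending a word `w` adds `1` at `w` to the scaled code, so the last word is the unique
coordinate where the code reaches `1`. Reading it off and cancelling `α > 0` recovers the code of
the prefix, and induction on the length finishes.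
-/

noncomputable def oneHot {V : Type*} [DecidableEq V] (w v : V) : ℝ := if v = w then 1 else 0

noncomputable def fofe {V : Type*} [DecidableEq V] (α : ℝ) (S : List V) : V → ℝ :=
  S.foldl (fun z w v => α * z v + oneHot w v) (fun _ => 0)

section

variable {V : Type*} [DecidableEq V] {α : ℝ}

lemma oneHot_nonneg (w v : V) : 0 ≤ oneHot w v := by
  unfold oneHot; split_ifs <;> norm_num

lemma oneHot_le_one (w v : V) : oneHot w v ≤ 1 := by
  unfold oneHot; split_ifs <;> norm_num

@[simp] lemma oneHot_self (w : V) : oneHot w w = 1 := if_pos rfl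

lemma oneHot_of_ne {w v : V} (h : v ≠ w) : oneHot w v = 0 := if_neg h

@[simp] lemma fofe_nil (α : ℝ) (v : V) : fofe α [] v = 0 := rfl

lemma fofe_append_singleton (α : ℝ) (S : List V) (w v : V) :
    fofe α (S ++ [w]) v = α * fofe α S v + oneHot w v := by
  simp [fofe, List.foldl_append]

lemma fofe_nonneg (hα0 : 0 ≤ α) (S : List V) (v : V) : 0 ≤ fofe α S v := by
  induction S using List.reverseRecOn with
  | nil => simp
  | append_singleton S w ih =>
    rw [fofe_append_singleton]
    exact add_nonneg (mul_nonneg hα0 ih) (oneHot_nonneg w v)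

lemma fofe_lt_two (hα0 : 0 ≤ α) (hα : α ≤ 1 / 2) (S : List V) (v : V) : fofe α S v < 2 := by
  induction S using List.reverseRecOn with
  | nil => simp
  | append_singleton S w ih =>
    rw [fofe_append_singleton]
    nlinarith [fofe_nonneg hα0 S v, oneHot_le_one w v]

lemma one_le_fofe_append_singleton_self (hα0 : 0 ≤ α) (S : List V) (w : V) :
    1 ≤ fofe α (S ++ [w]) w := by
  rw [fofe_append_singleton, oneHot_self]
  linarith [mul_nonneg hα0 (fofe_nonneg hα0 S w)]

lemma fofe_append_singleton_lt_one (hα0 : 0 ≤ α) (hα : α ≤ 1 / 2) (S : List V) {w v : V}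
    (h : v ≠ w) : fofe α (S ++ [w]) v < 1 := by
  rw [fofe_append_singleton, oneHot_of_ne h]
  nlinarith [fofe_nonneg hα0 S v, fofe_lt_two hα0 hα S v]

lemma fofe_append_singleton_ne_nil (hα0 : 0 ≤ α) (S : List V) (w : V) :
    fofe α (S ++ [w]) ≠ fofe α [] := fun h => by
  have := one_le_fofe_append_singleton_self hα0 S w
  rw [h, fofe_nil] at this
  norm_num at this

lemma eq_of_fofe_append_singleton_eq (hα0 : 0 ≤ α) (hα : α ≤ 1 / 2) {S S' : List V}
    {w w' : V} (h : fofe α (S ++ [w]) = fofe α (S' ++ [w'])) : w = w' := by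
  by_contra hne
  have hge := one_le_fofe_append_singleton_self hα0 S w
  rw [h] at hge
  exact (fofe_append_singleton_lt_one hα0 hα S' hne).not_ge hge

lemma fofe_eq_of_fofe_append_singleton_eq (hα : α ≠ 0) {S S' : List V} {w : V}
    (h : fofe α (S ++ [w]) = fofe α (S' ++ [w])) : fofe α S = fofe α S' := by
  funext v
  have hv := congrFun h v
  rw [fofe_append_singleton, fofe_append_singleton, add_left_inj] at hv
  exact mul_left_cancel₀ hα hv

end

theorem fofe_injective_general {V : Type*} [DecidableEq V] {α : ℝ}
    (hα0 : 0 < α) (hα : α ≤ 1/2) :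
    ∀ S S' : List V, fofe α S = fofe α S' → S = S' := by
  intro S
  induction S using List.reverseRecOn with
  | nil =>
    intro S' h
    rcases S'.eq_nil_or_concat' with rfl | ⟨T', w', rfl⟩
    · rfl
    · exact absurd h.symm (fofe_append_singleton_ne_nil hα0.le T' w')
  | append_singleton T w ih =>
    intro S' h
    rcases S'.eq_nil_or_concat' with rfl | ⟨T', w', rfl⟩
    · exact absurd h (fofe_append_singleton_ne_nil hα0.le T w)
    · obtain rfl := eq_of_fofe_append_singleton_eq hα0.le hα h
      rw [ih T' (fofe_eq_of_fofe_append_singleton_eq hα0.ne' h)]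

theorem fofe_injective {V : Type*} [Countable V] [DecidableEq V] {α : ℝ}
    (hα0 : 0 < α) (hα : α ≤ 1/2) :
    ∀ S S' : List V, fofe α S = fofe α S' → S = S' :=
  fofe_injective_general hα0 hα
end

section
/- For 0 < α ≤ 0.5 and any word v, the coordinate FOFE(S)(v) of the FOFE code, viewed as a number Σ_{n=1}^N α^{N-n}·b_n with b_n ∈ {0,1}, uniquely determines the binary string (b_1,…,b_N) given the length N: if Σ_{n=1}^N α^{N-n}·b_n = Σ_{n=1}^N α^{N-n}·c_n with b_n, c_n ∈ {0,1}, then b_n = c_n for all n. -/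
/-!
The coordinate obeys the FOFE recursion `z_{N+1} = α z_N + b_{N+1}`, and every code lies in
`[0, 2)` because `α ≤ 1/2`. Hence `α z_N < 1`, so the last bit is the integer part of `z_{N+1}`
and can be read off; cancelling it and dividing by `α` recovers `z_N`, and induction on `N`
recovers the whole string.
-/

open Finset

namespace Fofe

variable {α : ℝ}

noncomputable def coord (α : ℝ) {N : ℕ} (b : Fin N → Bool) : ℝ :=
  ∑ n : Fin N, α ^ (N - 1 - (n : ℕ)) * (if b n then (1:ℝ) else 0)

theorem coord_succ {N : ℕ} (b : Fin (N + 1) → Bool) :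
    coord α b = α * coord α (fun i => b i.castSucc) + (if b (Fin.last N) then 1 else 0) := by
  have hexp (i : Fin N) : N - (i : ℕ) = (N - 1 - i) + 1 := by omega
  rw [coord, Fin.sum_univ_castSucc, coord, mul_sum]
  simp only [Fin.val_castSucc, Fin.val_last, Nat.add_sub_cancel, Nat.sub_self, pow_zero, one_mul]
  congr 1
  exact sum_congr rfl fun i _ => by rw [hexp, pow_succ]; ring

theorem coord_nonneg (hα : 0 ≤ α) {N : ℕ} (b : Fin N → Bool) : 0 ≤ coord α b :=
  sum_nonneg fun n _ => mul_nonneg (pow_nonneg hα _) (by split_ifs <;> norm_num)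

theorem coord_lt_two (hα0 : 0 ≤ α) (hα : α ≤ 1/2) :
    ∀ {N : ℕ} (b : Fin N → Bool), coord α b < 2
  | 0, b => by simp [coord]
  | N + 1, b => by
    have ih := coord_lt_two hα0 hα fun i => b i.castSucc
    have hnonneg := coord_nonneg hα0 fun i => b i.castSucc
    have hbit : (if b (Fin.last N) then (1:ℝ) else 0) ≤ 1 := by split_ifs <;> norm_num
    rw [coord_succ]
    nlinarith

/-- One step of decoding: since `α x, α y ∈ [0, 1)`, the bits are the integer parts. -/
theorem eq_of_mul_add_bit_eq (hα0 : 0 < α) (hα : α ≤ 1/2) {x y : ℝ} (hx0 : 0 ≤ x)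
    (hx : x < 2) (hy0 : 0 ≤ y) (hy : y < 2) {p q : Bool}
    (h : α * x + (if p then 1 else 0) = α * y + (if q then 1 else 0)) : p = q ∧ x = y := by
  have hpq : p = q := by
    cases p <;> cases q <;> simp only [if_true, if_false, Bool.false_eq_true] at h ⊢ <;> nlinarith
  subst hpq
  exact ⟨rfl, mul_left_cancel₀ hα0.ne' (add_right_cancel h)⟩

theorem coord_injective (hα0 : 0 < α) (hα : α ≤ 1/2) :
    ∀ {N : ℕ}, Function.Injective (coord α (N := N))
  | 0, b, c, _ => funext fun i => i.elim0
  | N + 1, b, c, h => by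
    rw [coord_succ, coord_succ] at h
    obtain ⟨hlast, hinit⟩ := eq_of_mul_add_bit_eq hα0 hα (coord_nonneg hα0.le _)
      (coord_lt_two hα0.le hα _) (coord_nonneg hα0.le _) (coord_lt_two hα0.le hα _) h
    have hinit' := congrFun (coord_injective hα0 hα hinit)
    funext i
    induction i using Fin.lastCases with
    | last => exact hlast
    | cast i => exact hinit' i

end Fofe

theorem fofe_coord_determines_string {α : ℝ} (hα0 : 0 < α) (hα : α ≤ 1/2)
    {N : ℕ} (b c : Fin N → Bool)
    (h : ∑ n : Fin N, α ^ (N - 1 - (n : ℕ)) * (if b n then (1:ℝ) else 0) =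
         ∑ n : Fin N, α ^ (N - 1 - (n : ℕ)) * (if c n then (1:ℝ) else 0)) :
    b = c :=
  Fofe.coord_injective hα0 hα h
end

section
/- For any nonzero polynomial p with coefficients in {−1, 0, 1} and 0 < α < 1/2, p(α) ≠ 0. -/
/-!
Factor `p = X ^ n * q` with `n` the trailing degree, so that `q` has constant coefficient `±1`
and all coefficients in `[-1, 1]`. Writing `q = q.divX * X + q.coeff 0`, the geometric bound
`|q.divX.eval α| ≤ ∑ (1/2)^i ≤ 2` makes `|q.divX.eval α * α| < 1 = |q.coeff 0|`, so `q.eval α ≠ 0`.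
-/

open Polynomial Finset

namespace Polynomial

theorem X_pow_natTrailingDegree_dvd {R : Type*} [Semiring R] (p : R[X]) :
    X ^ p.natTrailingDegree ∣ p :=
  X_pow_dvd_iff.mpr fun _ => coeff_eq_zero_of_lt_natTrailingDegree

theorem abs_eval_le_two_of_abs_coeff_le_one {r : ℝ[X]} (hr : ∀ i, |r.coeff i| ≤ 1) {x : ℝ}
    (hx : |x| ≤ 1 / 2) : |r.eval x| ≤ 2 := by
  rw [eval_eq_sum_range]
  calc |∑ i ∈ range (r.natDegree + 1), r.coeff i * x ^ i|
      ≤ ∑ i ∈ range (r.natDegree + 1), |r.coeff i * x ^ i| := abs_sum_le_sum_abs _ _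
    _ ≤ ∑ i ∈ range (r.natDegree + 1), (1 / 2 : ℝ) ^ i := by
      refine sum_le_sum fun i _ => ?_
      rw [abs_mul, abs_pow, ← one_mul ((1 / 2 : ℝ) ^ i)]
      exact mul_le_mul (hr i) (pow_le_pow_left₀ (abs_nonneg x) hx i) (by positivity) zero_le_one
    _ ≤ 2 := sum_geometric_two_le _

theorem eval_ne_zero_of_abs_coeff_zero_eq_one {q : ℝ[X]} (hq : ∀ i, |q.coeff i| ≤ 1)
    (hq0 : |q.coeff 0| = 1) {x : ℝ} (hx : |x| < 1 / 2) : q.eval x ≠ 0 := by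
  have hdivX : |q.divX.eval x| ≤ 2 :=
    abs_eval_le_two_of_abs_coeff_le_one (fun i => by simpa only [coeff_divX] using hq (i + 1))
      hx.le
  have htail : |q.divX.eval x * x| < 1 :=
    calc |q.divX.eval x * x| = |q.divX.eval x| * |x| := abs_mul _ _
      _ ≤ 2 * |x| := mul_le_mul_of_nonneg_right hdivX (abs_nonneg x)
      _ < 1 := by linarith
  have hsplit : q.divX.eval x * x + q.coeff 0 = q.eval x := by
    simpa only [eval_add, eval_mul, eval_X, eval_C] using congrArg (eval x) q.divX_mul_X_add
  intro hzero
  rw [hzero, add_eq_zero_iff_eq_neg] at hsplit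
  rw [hsplit, abs_neg] at htail
  exact htail.ne hq0

theorem eval_ne_zero_of_abs_trailingCoeff_eq_one {p : ℝ[X]} (hp : ∀ i, |p.coeff i| ≤ 1)
    (hp0 : |p.trailingCoeff| = 1) {x : ℝ} (hx0 : x ≠ 0) (hx : |x| < 1 / 2) : p.eval x ≠ 0 := by
  set n := p.natTrailingDegree
  obtain ⟨q, hpq⟩ := p.X_pow_natTrailingDegree_dvd
  have hcoeff (i : ℕ) : q.coeff i = p.coeff (i + n) := by rw [hpq, coeff_X_pow_mul]
  rw [hpq, eval_mul, eval_pow, eval_X]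
  refine mul_ne_zero (pow_ne_zero _ hx0) (eval_ne_zero_of_abs_coeff_zero_eq_one ?_ ?_ hx)
  · exact fun i => hcoeff i ▸ hp _
  · rwa [hcoeff, zero_add]

end Polynomial

theorem signed_poly_no_small_root (p : Polynomial ℝ) (hp : p ≠ 0)
    (hcoeff : ∀ k, p.coeff k ∈ ({-1, 0, 1} : Set ℝ))
    {α : ℝ} (hα0 : 0 < α) (hα : α < 1/2) :
    p.eval α ≠ 0 := by
  have hcases (k : ℕ) : p.coeff k = -1 ∨ p.coeff k = 0 ∨ p.coeff k = 1 := hcoeff k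
  have habs_coeff (k : ℕ) : |p.coeff k| ≤ 1 := by
    rcases hcases k with h | h | h <;> simp [h]
  have htrailing : |p.trailingCoeff| = 1 := by
    have hne : p.trailingCoeff ≠ 0 := trailingCoeff_nonzero_iff_nonzero.mpr hp
    rcases hcases p.natTrailingDegree with h | h | h <;> simp_all [trailingCoeff]
  exact eval_ne_zero_of_abs_trailingCoeff_eq_one habs_coeff htrailing hα0.ne'
    (by rwa [abs_of_pos hα0])
end
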